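/- arXiv:1405.3950 — 2 statements merged into one kernel-verified Lean document; each statement's English description precedes it below -/
import Mathlib

section
/- There exists a constant c > 0 such that for every n ≥ 2 there exist n closed disks B₁,…,Bₙ with radii r₁,…,rₙ > 0, contained in the unit square U = [0,1]², with pairwise disjoint interiors, each intersecting the frontier of U, and with ∑ᵢ rᵢ ≥ c · log n. (Lower bound part of Theorem 1: the O(log n) bound on the total perimeter of boundary-touching disk packings in the unit square is best possible.) -/
open MeasureTheory Metric Set

/-- The unit square `[0,1]² ⊆ ℝ²`. -/
def unitSquare : Set (EuclideanSpace ℝ (Fin 2)) :=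
  {p | p 0 ∈ Set.Icc (0 : ℝ) 1 ∧ p 1 ∈ Set.Icc (0 : ℝ) 1}

/-!
For a reduced fraction `p / q ∈ (0, 1)` take its Ford disk: radius `1 / (2 q²)`, tangent to the
bottom side of the square at `(p / q, 0)`. Two disks of radii `r, s` tangent to a line at points
`a, b` are disjoint iff `4 r s ≤ (a - b)²`, and for Ford disks this reads
`|p / q - p' / q'| ≥ 1 / (q q')`.
The Ford disks with `q ≤ Q` have total radius `½ ∑_{2 ≤ q ≤ Q} φ(q) / q²`, which grows like
`log Q`: writing `m = ∑_{d ∣ m} φ(d)` gives `∑_{m ≤ Q} 1 / m ≤ (∑_{d ≤ Q} φ(d) / d²)(∑_k 1 / k²)`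
and `∑_k 1 / k² ≤ 2`. With `Q ≈ √n` there are at most `n` of them, and further Ford disks bring
the count to exactly `n`.
-/

open Finset Filter Topology
open scoped Nat

lemma Set.Infinite.exists_finset_superset_card_eq {α : Type*} {s : Set α} (hs : s.Infinite)
    {F : Finset α} (hF : ↑F ⊆ s) {n : ℕ} (hn : #F ≤ n) :
    ∃ T : Finset α, F ⊆ T ∧ ↑T ⊆ s ∧ #T = n := by
  classical
  have := hs.to_subtype
  obtain ⟨T, hFT, hT⟩ := Infinite.exists_superset_card_eq (F.subtype (· ∈ s)) n
    (by rwa [card_subtype, filter_true_of_mem hF])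
  refine ⟨T.map (Function.Embedding.subtype _), fun x hx => ?_, by simp, by simpa⟩
  exact mem_map_of_mem _ (hFT (mem_subtype.2 hx : (⟨x, hF hx⟩ : s) ∈ _))

lemma closedBall_subset_unitSquare {p : EuclideanSpace ℝ (Fin 2)} {r : ℝ}
    (h₀ : p 0 ∈ Icc r (1 - r)) (h₁ : p 1 ∈ Icc r (1 - r)) : closedBall p r ⊆ unitSquare := by
  intro q hq
  have hcoord (i : Fin 2) : |q i - p i| ≤ r :=
    (Real.dist_eq _ _ ▸ PiLp.dist_apply_le q p i).trans (mem_closedBall.1 hq)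
  have hq₀ := abs_le.1 (hcoord 0)
  have hq₁ := abs_le.1 (hcoord 1)
  exact ⟨⟨by linarith [h₀.1], by linarith [h₀.2]⟩, ⟨by linarith [h₁.1], by linarith [h₁.2]⟩⟩

lemma mem_frontier_unitSquare_of_apply_one_eq_zero {p : EuclideanSpace ℝ (Fin 2)}
    (hp : p ∈ unitSquare) (h : p 1 = 0) : p ∈ frontier unitSquare := by
  refine ⟨subset_closure hp, fun hint => ?_⟩
  have hpath : Tendsto (fun t : ℝ => p + t • EuclideanSpace.single 1 1) (𝓝[<] 0) (𝓝 p) := by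
    refine tendsto_nhdsWithin_of_tendsto_nhds (Continuous.tendsto' ?_ 0 p (by simp))
    fun_prop
  obtain ⟨t, ht, hpt⟩ :=
    ((hpath.eventually (mem_interior_iff_mem_nhds.1 hint)).and self_mem_nhdsWithin).exists
  have : 0 ≤ t := by simpa [h] using ht.2.1
  exact lt_irrefl _ (this.trans_lt hpt)

lemma disjoint_ball_of_four_mul_le_sq {a b r s : ℝ} (hr : 0 ≤ r) (hs : 0 ≤ s)
    (h : 4 * r * s ≤ (a - b) ^ 2) :
    Disjoint (ball !₂[a, r] r) (ball !₂[b, s] s) := by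
  refine ball_disjoint_ball ?_
  rw [EuclideanSpace.dist_eq, Real.le_sqrt (by positivity) (by positivity)]
  simp only [Fin.sum_univ_two, Real.dist_eq, sq_abs, Matrix.cons_val_zero,
    Matrix.cons_val_one, Matrix.cons_val_fin_one]
  nlinarith

def fordIndices : Set (ℕ × ℕ) := {x | 0 < x.1 ∧ x.1 < x.2 ∧ x.1.Coprime x.2}

noncomputable def fordRadius (x : ℕ × ℕ) : ℝ := 1 / (2 * (x.2 : ℝ) ^ 2)

noncomputable def fordCenter (x : ℕ × ℕ) : EuclideanSpace ℝ (Fin 2) :=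
  !₂[(x.1 : ℝ) / x.2, fordRadius x]

lemma fordIndices_infinite : fordIndices.Infinite :=
  Set.infinite_of_injective_forall_mem (f := fun q : ℕ => (1, q + 2))
    (fun _ _ h => by simpa using h) (fun q => ⟨one_pos, by omega, Nat.coprime_one_left _⟩)

lemma fordRadius_nonneg (x : ℕ × ℕ) : 0 ≤ fordRadius x := by
  unfold fordRadius; positivity

lemma fordRadius_pos {x : ℕ × ℕ} (hx : x ∈ fordIndices) : 0 < fordRadius x := by
  have : (0 : ℝ) < x.2 := by exact_mod_cast hx.1.trans hx.2.1
  unfold fordRadius; positivity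

lemma closedBall_fordCenter_subset_unitSquare {x : ℕ × ℕ} (hx : x ∈ fordIndices) :
    closedBall (fordCenter x) (fordRadius x) ⊆ unitSquare := by
  obtain ⟨hp, hpq, -⟩ := hx
  have hp' : (1 : ℝ) ≤ x.1 := by exact_mod_cast hp
  have hpq' : (x.1 : ℝ) + 1 ≤ x.2 := by exact_mod_cast hpq
  have hq : (0 : ℝ) < x.2 := by linarith
  have hr : fordRadius x ≤ 1 / x.2 := by
    unfold fordRadius
    gcongr
    nlinarith
  have hleft : 1 / (x.2 : ℝ) ≤ x.1 / x.2 := by gcongr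
  have hright : (x.1 : ℝ) / x.2 ≤ 1 - 1 / x.2 := by
    rw [div_le_iff₀ hq, sub_mul, one_div_mul_cancel hq.ne']
    linarith
  apply closedBall_subset_unitSquare
  · simp only [fordCenter, PiLp.toLp_apply, Matrix.cons_val_zero]
    constructor <;> linarith
  · simp only [fordCenter, PiLp.toLp_apply, Matrix.cons_val_one, Matrix.cons_val_fin_one]
    have : 1 / (x.2 : ℝ) ≤ 1 / 2 := by gcongr; linarith
    constructor <;> linarith

lemma closedBall_fordCenter_inter_frontier_nonempty {x : ℕ × ℕ} (hx : x ∈ fordIndices) :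
    (closedBall (fordCenter x) (fordRadius x) ∩ frontier unitSquare).Nonempty := by
  have hmem : !₂[(x.1 : ℝ) / x.2, 0] ∈ closedBall (fordCenter x) (fordRadius x) := by
    rw [mem_closedBall, EuclideanSpace.dist_eq]
    simp [fordCenter, Fin.sum_univ_two, Real.dist_eq, Real.sqrt_sq (fordRadius_nonneg x)]
  exact ⟨_, hmem, mem_frontier_unitSquare_of_apply_one_eq_zero
    (closedBall_fordCenter_subset_unitSquare hx hmem) (by simp)⟩

lemma mul_ne_mul_of_mem_fordIndices {x y : ℕ × ℕ} (hx : x ∈ fordIndices) (hy : y ∈ fordIndices)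
    (hne : x ≠ y) : x.1 * y.2 ≠ y.1 * x.2 := by
  intro h
  have hq : x.2 = y.2 := Nat.dvd_antisymm
    ((Nat.Coprime.dvd_mul_left hx.2.2.symm).1 ⟨y.1, by rw [h, mul_comm]⟩)
    ((Nat.Coprime.dvd_mul_left hy.2.2.symm).1 ⟨x.1, by rw [← h, mul_comm]⟩)
  have hp : x.1 = y.1 := Nat.eq_of_mul_eq_mul_right (hx.1.trans hx.2.1) (hq ▸ h)
  exact hne (Prod.ext hp hq)

lemma one_le_sub_sq_of_ne {a b : ℕ} (h : a ≠ b) : 1 ≤ ((a : ℝ) - b) ^ 2 := by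
  have : (1 : ℝ) ≤ |(a : ℝ) - b| := by
    exact_mod_cast Int.one_le_abs (sub_ne_zero.2 (Nat.cast_injective.ne h : (a : ℤ) ≠ b))
  nlinarith [abs_nonneg ((a : ℝ) - b), sq_abs ((a : ℝ) - b)]

lemma disjoint_interior_closedBall_fordCenter {x y : ℕ × ℕ} (hx : x ∈ fordIndices)
    (hy : y ∈ fordIndices) (hne : x ≠ y) :
    Disjoint (interior (closedBall (fordCenter x) (fordRadius x)))
      (interior (closedBall (fordCenter y) (fordRadius y))) := by
  rw [interior_closedBall _ (fordRadius_pos hx).ne', interior_closedBall _ (fordRadius_pos hy).ne']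
  refine disjoint_ball_of_four_mul_le_sq (fordRadius_nonneg x) (fordRadius_nonneg y) ?_
  have hqx : (0 : ℝ) < x.2 := by exact_mod_cast hx.1.trans hx.2.1
  have hqy : (0 : ℝ) < y.2 := by exact_mod_cast hy.1.trans hy.2.1
  have hcross := one_le_sub_sq_of_ne (mul_ne_mul_of_mem_fordIndices hx hy hne)
  push_cast at hcross
  calc 4 * fordRadius x * fordRadius y = 1 / ((x.2 : ℝ) * y.2) ^ 2 := by
        unfold fordRadius; field_simp; ring
    _ ≤ ((x.1 : ℝ) * y.2 - y.1 * x.2) ^ 2 / ((x.2 : ℝ) * y.2) ^ 2 := by gcongr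
    _ = ((x.1 : ℝ) / x.2 - y.1 / y.2) ^ 2 := by field_simp

lemma sum_inv_sq_of_dvd_le {d : ℕ} (hd : 0 < d) (Q : ℕ) :
    ∑ m ∈ Finset.Icc 1 Q with d ∣ m, ((m : ℝ) ^ 2)⁻¹ ≤ 2 / (d : ℝ) ^ 2 := by
  have hsub : {m ∈ Finset.Icc 1 Q | d ∣ m} ⊆ (Finset.Ioo 0 (Q + 1)).image (d * ·) := by
    intro m hm
    obtain ⟨⟨hm₁, hmQ⟩, k, rfl⟩ := by simpa using hm
    have hk : 0 < k := Nat.pos_of_mul_pos_left hm₁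
    exact Finset.mem_image.2 ⟨k, Finset.mem_Ioo.2 ⟨hk, by nlinarith⟩, rfl⟩
  calc ∑ m ∈ Finset.Icc 1 Q with d ∣ m, ((m : ℝ) ^ 2)⁻¹
      ≤ ∑ m ∈ (Finset.Ioo 0 (Q + 1)).image (d * ·), ((m : ℝ) ^ 2)⁻¹ :=
        sum_le_sum_of_subset_of_nonneg hsub fun _ _ _ => by positivity
    _ = ((d : ℝ) ^ 2)⁻¹ * ∑ k ∈ Finset.Ioo 0 (Q + 1), ((k : ℝ) ^ 2)⁻¹ := by
        rw [sum_image fun _ _ _ _ h => Nat.eq_of_mul_eq_mul_left hd h, mul_sum]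
        push_cast
        simp only [mul_pow, mul_inv]
    _ ≤ ((d : ℝ) ^ 2)⁻¹ * (2 / ((0 : ℕ) + 1)) := by gcongr; exact sum_Ioo_inv_sq_le 0 (Q + 1)
    _ = 2 / (d : ℝ) ^ 2 := by simp [div_eq_inv_mul]

lemma sum_inv_le_two_mul_sum_totient_div_sq (Q : ℕ) :
    ∑ m ∈ Finset.Icc 1 Q, (m : ℝ)⁻¹ ≤ 2 * ∑ d ∈ Finset.Icc 1 Q, (φ d : ℝ) / (d : ℝ) ^ 2 := by
  calc ∑ m ∈ Finset.Icc 1 Q, (m : ℝ)⁻¹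
      = ∑ m ∈ Finset.Icc 1 Q, ∑ d ∈ m.divisors, (φ d : ℝ) * ((m : ℝ) ^ 2)⁻¹ := by
        refine sum_congr rfl fun m hm => ?_
        have hm : (m : ℝ) ≠ 0 := by have := (Finset.mem_Icc.1 hm).1; positivity
        rw [← sum_mul, ← Nat.cast_sum, Nat.sum_totient]
        field_simp
    _ = ∑ d ∈ Finset.Icc 1 Q, ∑ m ∈ Finset.Icc 1 Q with d ∣ m, (φ d : ℝ) * ((m : ℝ) ^ 2)⁻¹ := by
        refine sum_comm' fun m d => ?_
        simp only [Finset.mem_Icc, mem_filter, Nat.mem_divisors]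
        constructor
        · rintro ⟨⟨hm, hmQ⟩, hdm, -⟩
          exact ⟨⟨⟨hm, hmQ⟩, hdm⟩, Nat.pos_of_dvd_of_pos hdm hm, (Nat.le_of_dvd hm hdm).trans hmQ⟩
        · rintro ⟨⟨⟨hm, hmQ⟩, hdm⟩, -⟩
          exact ⟨⟨hm, hmQ⟩, hdm, by omega⟩
    _ ≤ ∑ d ∈ Finset.Icc 1 Q, (φ d : ℝ) * (2 / (d : ℝ) ^ 2) := by
        refine sum_le_sum fun d hd => ?_
        rw [← mul_sum]
        exact mul_le_mul_of_nonneg_left (sum_inv_sq_of_dvd_le (Finset.mem_Icc.1 hd).1 Q)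
          (by positivity)
    _ = 2 * ∑ d ∈ Finset.Icc 1 Q, (φ d : ℝ) / (d : ℝ) ^ 2 := by
        rw [mul_sum]
        exact sum_congr rfl fun d _ => by ring

def fordPairs (Q : ℕ) : Finset (ℕ × ℕ) :=
  {x ∈ Finset.Ico 1 Q ×ˢ Finset.Icc 2 Q | 0 < x.1 ∧ x.1 < x.2 ∧ x.1.Coprime x.2}

lemma coe_fordPairs_subset (Q : ℕ) : ↑(fordPairs Q) ⊆ fordIndices :=
  fun _ hx => (mem_filter.1 hx).2

lemma card_fordPairs_le (Q : ℕ) : #(fordPairs Q) ≤ (Q - 1) ^ 2 := by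
  calc #(fordPairs Q) ≤ #(Finset.Ico 1 Q ×ˢ Finset.Icc 2 Q) := card_filter_le _ _
    _ = (Q - 1) ^ 2 := by simp [card_product, sq]

lemma sum_fordPairs_comp_snd (Q : ℕ) (g : ℕ → ℝ) :
    ∑ x ∈ fordPairs Q, g x.2 = ∑ q ∈ Finset.Icc 2 Q, (φ q : ℝ) * g q := by
  rw [sum_finset_product_right' (fordPairs Q) (Finset.Icc 2 Q)
    (fun q => {p ∈ range q | q.Coprime p}) (f := fun _ q => g q)]
  · refine sum_congr rfl fun q _ => ?_
    rw [sum_const, nsmul_eq_mul, ← Nat.totient_eq_card_coprime]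
  · rintro ⟨p, q⟩
    simp only [fordPairs, mem_filter, mem_product, Finset.mem_Ico, Finset.mem_Icc,
      Finset.mem_range]
    constructor
    · rintro ⟨⟨-, hq⟩, -, hpq, hcop⟩
      exact ⟨hq, hpq, hcop.symm⟩
    · rintro ⟨⟨hq, hqQ⟩, hpq, hcop⟩
      have hp : p ≠ 0 := by rintro rfl; simp at hcop; omega
      exact ⟨⟨⟨by omega, by omega⟩, hq, hqQ⟩, by omega, hpq, hcop.symm⟩

lemma log_le_sum_fordRadius_fordPairs {Q : ℕ} (hQ : 1 ≤ Q) :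
    (Real.log (Q + 1) - 2) / 4 ≤ ∑ x ∈ fordPairs Q, fordRadius x := by
  have hsum : ∑ x ∈ fordPairs Q, fordRadius x =
      (∑ q ∈ Finset.Icc 2 Q, (φ q : ℝ) / (q : ℝ) ^ 2) / 2 := by
    rw [sum_div]
    exact (sum_fordPairs_comp_snd Q fun q => 1 / (2 * (q : ℝ) ^ 2)).trans
      (sum_congr rfl fun q _ => by ring)
  have hsplit : ∑ d ∈ Finset.Icc 1 Q, (φ d : ℝ) / (d : ℝ) ^ 2 =
      1 + ∑ q ∈ Finset.Icc 2 Q, (φ q : ℝ) / (q : ℝ) ^ 2 := by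
    rw [← Finset.insert_Icc_add_one_left_eq_Icc hQ, sum_insert (by simp)]
    simp
  have hlog : Real.log (Q + 1) ≤ ∑ m ∈ Finset.Icc 1 Q, (m : ℝ)⁻¹ := by
    simpa [harmonic_eq_sum_Icc] using log_add_one_le_harmonic Q
  linarith [sum_inv_le_two_mul_sum_totient_div_sq Q]

lemma exists_finset_fordIndices_card_eq_log_le_sum {n : ℕ} (hn : 0 < n) :
    ∃ T : Finset (ℕ × ℕ), ↑T ⊆ fordIndices ∧ #T = n ∧
      Real.log n / 40 ≤ ∑ x ∈ T, fordRadius x := by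
  set Q := n.sqrt + 1
  have hQ : 2 ≤ Q := Nat.succ_le_succ (Nat.sqrt_pos.2 hn)
  obtain ⟨T, hFT, hT, hTn⟩ := fordIndices_infinite.exists_finset_superset_card_eq
    (coe_fordPairs_subset Q) ((card_fordPairs_le Q).trans (by simpa [Q] using Nat.sqrt_le' n))
  refine ⟨T, hT, hTn, ?_⟩
  have hmono : ∑ x ∈ fordPairs Q, fordRadius x ≤ ∑ x ∈ T, fordRadius x :=
    sum_le_sum_of_subset_of_nonneg hFT fun x _ _ => fordRadius_nonneg x
  have hhalf : 1 / 8 ≤ ∑ x ∈ fordPairs Q, fordRadius x := by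
    have : fordRadius (1, 2) = 1 / 8 := by norm_num [fordRadius]
    exact this ▸ single_le_sum (fun x _ => fordRadius_nonneg x) (by simp [fordPairs]; omega)
  have hlog : Real.log n ≤ 2 * Real.log (Q + 1) := by
    have : (n : ℝ) ≤ ((Q : ℝ) + 1) ^ 2 := by
      exact_mod_cast (Nat.lt_succ_sqrt' n).le.trans (Nat.pow_le_pow_left (by omega) 2)
    calc Real.log n ≤ Real.log (((Q : ℝ) + 1) ^ 2) :=
          Real.log_le_log (by exact_mod_cast hn) this
      _ = 2 * Real.log (Q + 1) := by rw [Real.log_pow]; norm_num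
  have := log_le_sum_fordRadius_fordPairs (Q := Q) (by omega)
  rcases le_total (Real.log n) 5 with h | h <;> linarith

/-- Theorem 1, lower bound: There is `c > 0` such that for every `n ≥ 2`
there exist `n` disks packed in the unit square, each touching its boundary, whose radii
sum to at least `c · log n`. -/
theorem exists_disks_touching_square_boundary_log_lower :
    ∃ c : ℝ, 0 < c ∧ ∀ n : ℕ, 2 ≤ n →
      ∃ (x : Fin n → EuclideanSpace ℝ (Fin 2)) (r : Fin n → ℝ),
        (∀ i, 0 < r i) ∧
        (∀ i, closedBall (x i) (r i) ⊆ unitSquare) ∧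
        (∀ i j, i ≠ j →
          Disjoint (interior (closedBall (x i) (r i)))
                   (interior (closedBall (x j) (r j)))) ∧
        (∀ i, (closedBall (x i) (r i) ∩ frontier unitSquare).Nonempty) ∧
        c * Real.log n ≤ ∑ i, r i := by
  refine ⟨1 / 40, by norm_num, fun n hn => ?_⟩
  obtain ⟨T, hT, hTn, hsum⟩ := exists_finset_fordIndices_card_eq_log_le_sum (n := n) (by omega)
  let e : Fin n ≃ T := (T.equivFinOfCardEq hTn).symm
  have he (i : Fin n) : (e i : ℕ × ℕ) ∈ fordIndices := hT (e i).2
  refine ⟨fun i => fordCenter (e i), fun i => fordRadius (e i), fun i => fordRadius_pos (he i),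
    fun i => closedBall_fordCenter_subset_unitSquare (he i),
    fun i j hij => disjoint_interior_closedBall_fordCenter (he i) (he j)
      (Subtype.val_injective.ne (e.injective.ne hij)),
    fun i => closedBall_fordCenter_inter_frontier_nonempty (he i), ?_⟩
  rw [e.sum_comp (fun x : T => fordRadius x), sum_coe_sort T fordRadius]
  linarith
end

section
/- Let C and D be convex bodies in ℝ². There exists a constant ρ > 0 (depending on C and D) such that for every n ≥ 2 and every packing C₁,…,Cₙ in D of positive homothets of C (Cᵢ = vᵢ + μᵢ • C, μᵢ > 0), one has ∑ᵢ μᵢ ≤ ρ · (esc(S) + log n), where esc(S) = ∑ᵢ esc(Cᵢ) and esc(Cᵢ) = inf{dist(x,y) : x ∈ Cᵢ, y ∈ frontier D} is the distance from Cᵢ to the frontier of D. (Proposition 4.) -/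
/-!
Homothets no larger than their escape distance contribute at most `esc(S)` in total. Every
homothet contains a ball of radius `r μ`, so `μ ≤ M := diam D / (2 r)`, and one with escape
distance below `μ` lies within `(1 + diam C) μ` of `∂D`. Since `D` is convex, its points within
`w` of `∂D` have area `O(w)`: they miss a homothetic copy of `D` of ratio `1 - O(w)`. So in each
dyadic class `μ ∈ (M / 2 ^ (k + 1), M / 2 ^ k]` the disjoint inner balls have total area
`O(M / 2 ^ k)`, and the class contributes `O(1)` to `∑ μ`. Only the `⌈log₂ n⌉` top classes
count: the at most `n` homothets below them have total size at most `M`.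
-/

open MeasureTheory Metric Set

/-- The infimum distance between two sets in ℝ² (the escape distance when the second set
is the frontier of the container). -/
noncomputable def escDist (K L : Set (EuclideanSpace ℝ (Fin 2))) : ℝ :=
  sInf (Set.image2 dist K L)

open Bornology Pointwise

section NormedSpace

variable {E : Type*} [NormedAddCommGroup E] [NormedSpace ℝ E]

def homothet (C : Set E) (v : E) (a : ℝ) : Set E := (fun x => v + a • x) '' C

structure IsHomothetPacking {ι : Type*} (C D : Set E) (v : ι → E) (μ : ι → ℝ) : Prop where
  pos : ∀ i, 0 < μ i
  subset : ∀ i, homothet C (v i) (μ i) ⊆ D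
  disjoint : Pairwise fun i j =>
    Disjoint (interior (homothet C (v i) (μ i))) (interior (homothet C (v j) (μ j)))

theorem homothet_eq_vadd_smul (C : Set E) (v : E) (a : ℝ) : homothet C v a = v +ᵥ a • C := by
  rw [homothet, ← image_smul, ← image_vadd, image_image]
  rfl

theorem ball_subset_homothet {C : Set E} {c : E} {r a : ℝ} (hcr : ball c r ⊆ C) (ha : 0 < a)
    (v : E) : ball (v + a • c) (a * r) ⊆ homothet C v a := by
  have hball := _root_.smul_ball ha.ne' c r
  rw [Real.norm_of_nonneg ha.le] at hball
  rw [homothet_eq_vadd_smul, ← vadd_eq_add, ← vadd_ball, ← hball]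
  exact vadd_set_mono (smul_set_mono hcr)

theorem Bornology.IsBounded.homothet {C : Set E} (hC : IsBounded C) (v : E) (a : ℝ) :
    IsBounded (homothet C v a) := by
  rw [homothet_eq_vadd_smul]
  exact (hC.smul₀ a).vadd v

theorem diam_homothet {a : ℝ} (ha : 0 ≤ a) (C : Set E) (v : E) :
    diam (homothet C v a) = a * diam C := by
  rw [homothet_eq_vadd_smul, diam_vadd, diam_smul₀, Real.norm_of_nonneg ha]

theorem le_diam_div_of_ball_subset_homothet [Nontrivial E] {C D : Set E} {c : E} {r a : ℝ}
    (hr : 0 < r) (ha : 0 < a) (hcr : ball c r ⊆ C) (hD : IsBounded D) {v : E}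
    (hCD : homothet C v a ⊆ D) :
    a ≤ diam D / (2 * r) := by
  have := diam_mono ((ball_subset_homothet hcr ha v).trans hCD) hD
  rw [diam_ball_eq _ (by positivity)] at this
  rw [le_div_iff₀ (by positivity)]
  linarith

theorem IsCompact.frontier_nonempty [Nontrivial E] {D : Set E} (hD : IsCompact D)
    (hne : D.Nonempty) : (frontier D).Nonempty :=
  nonempty_frontier_iff.mpr ⟨hne, hD.ne_univ⟩

theorem Convex.ball_homothety_subset {D : Set E} (hD : Convex ℝ D) {z : E} {r : ℝ}
    (hzr : ball z r ⊆ D) {x : E} (hx : x ∈ D) {l : ℝ} (hl0 : 0 ≤ l) (hl1 : l < 1) :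
    ball (AffineMap.homothety z l x) ((1 - l) * r) ⊆ D := by
  intro y hy
  have hl : 0 < 1 - l := sub_pos.mpr hl1
  set u := z + (1 - l)⁻¹ • (y - AffineMap.homothety z l x)
  have hu : u ∈ ball z r := by
    rw [mem_ball, dist_eq_norm] at hy
    rw [mem_ball, dist_self_add_left, norm_smul, norm_inv, Real.norm_eq_abs, abs_of_pos hl,
      inv_mul_lt_iff₀ hl]
    exact hy
  have hyu : y = l • x + (1 - l) • u := by
    simp only [u, AffineMap.homothety_apply, vsub_eq_sub, vadd_eq_add, smul_add, smul_smul,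
      mul_inv_cancel₀ hl.ne', one_smul]
    module
  exact hyu ▸ hD hx (hzr hu) hl0 hl.le (by ring)

variable [MeasurableSpace E] [BorelSpace E] [FiniteDimensional ℝ E] [Nontrivial E]
  (μ : Measure E) [μ.IsAddHaarMeasure]

/-- The points within `w` of the frontier miss the image of `D` under the homothety of ratio
`1 - w / r` about `z`, of measure `(1 - w / r) ^ d * μ D`; Bernoulli's inequality finishes. -/
theorem Convex.addHaar_inter_thickening_frontier_le {D : Set E} (hD : Convex ℝ D) {z : E}
    {r w : ℝ} (hr : 0 < r) (hw : 0 < w) (hzr : ball z r ⊆ D) :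
    μ (D ∩ Metric.thickening w (frontier D)) ≤
      ENNReal.ofReal (Module.finrank ℝ E * w / r) * μ D := by
  set d := Module.finrank ℝ E
  have hd : (1 : ℝ) ≤ d := by exact_mod_cast Module.finrank_pos
  by_cases hwr : r ≤ w
  · refine (measure_mono inter_subset_left).trans (le_mul_of_one_le_left zero_le ?_)
    rw [ENNReal.one_le_ofReal, le_div_iff₀ hr]
    nlinarith
  by_cases hμD : μ D = ⊤
  · rw [hμD, ENNReal.mul_top (by simp; positivity)]
    exact le_top
  set l := 1 - w / r
  have hl0 : 0 ≤ l := by simp only [l, sub_nonneg, div_le_one hr]; linarith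
  have hl1 : l < 1 := by simp only [l]; linarith [div_pos hw hr]
  have himage : AffineMap.homothety z l '' D ⊆ D \ Metric.thickening w (frontier D) := by
    rintro _ ⟨x, hx, rfl⟩
    have hball : ball (AffineMap.homothety z l x) w ⊆ interior D := by
      rw [isOpen_ball.subset_interior_iff]
      convert hD.ball_homothety_subset hzr hx hl0 hl1 using 2
      simp only [l]; field_simp; ring
    refine ⟨interior_subset (hball (mem_ball_self hw)), fun hmem => ?_⟩
    obtain ⟨y, hy, hxy⟩ := mem_thickening_iff.mp hmem
    exact hy.2 (hball (mem_ball'.mpr hxy))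
  have hsum : μ (D ∩ Metric.thickening w (frontier D)) + ENNReal.ofReal (l ^ d) * μ D ≤ μ D := by
    calc μ (D ∩ Metric.thickening w (frontier D)) + ENNReal.ofReal (l ^ d) * μ D
        = μ (D ∩ Metric.thickening w (frontier D)) + μ (AffineMap.homothety z l '' D) := by
          rw [Measure.addHaar_image_homothety, abs_of_nonneg (by positivity)]
      _ ≤ μ (D ∩ Metric.thickening w (frontier D)) + μ (D \ Metric.thickening w (frontier D)) := by
          gcongr
      _ = μ D := measure_inter_add_sdiff D isOpen_thickening.measurableSet
  have hbernoulli : 1 - l ^ d ≤ d * w / r := by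
    have := one_add_mul_le_pow (a := -(w / r)) (by linarith [div_nonneg hw.le hr.le]) d
    rw [← sub_eq_add_neg] at this
    linarith [mul_div_assoc (d : ℝ) w r]
  calc μ (D ∩ Metric.thickening w (frontier D)) ≤ μ D - ENNReal.ofReal (l ^ d) * μ D :=
        ENNReal.le_sub_of_add_le_right (ENNReal.mul_ne_top ENNReal.ofReal_ne_top hμD) hsum
    _ = ENNReal.ofReal (1 - l ^ d) * μ D := by
        rw [ENNReal.ofReal_sub _ (by positivity), ENNReal.ofReal_one,
          ENNReal.sub_mul (fun _ _ => hμD), one_mul]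
    _ ≤ ENNReal.ofReal (d * w / r) * μ D := by gcongr

end NormedSpace

theorem Finset.sum_filter_lt_le_mul_of_antitone {ι : Type*} (s : Finset ι) (f : ι → ℝ)
    {θ : ℕ → ℝ} (hθ : Antitone θ) (htop : ∀ i ∈ s, f i ≤ θ 0) {c : ℝ}
    (hc : ∀ k, ∑ i ∈ s with θ (k + 1) < f i ∧ f i ≤ θ k, f i ≤ c) (K : ℕ) :
    ∑ i ∈ s with θ K < f i, f i ≤ K * c := by
  classical
  induction K with
  | zero =>
    rw [Finset.filter_false_of_mem fun i hi => not_lt.mpr (htop i hi)]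
    simp
  | succ K ih =>
    have hsplit : s.filter (fun i => θ (K + 1) < f i) =
        s.filter (fun i => θ K < f i) ∪ s.filter (fun i => θ (K + 1) < f i ∧ f i ≤ θ K) := by
      rw [← Finset.filter_or]
      refine Finset.filter_congr fun i _ => ⟨fun h => ?_, ?_⟩
      · exact (lt_or_ge (θ K) (f i)).imp_right (⟨h, ·⟩)
      · rintro (h | h)
        exacts [(hθ K.le_succ).trans_lt h, h.1]
    rw [hsplit, Finset.sum_union
      (Finset.disjoint_filter.mpr fun i _ h h' => (h'.2 : f i ≤ θ K).not_gt h)]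
    push_cast
    linarith [hc K]

theorem Nat.clog_two_mul_log_two_le {n : ℕ} (hn : 2 ≤ n) :
    (Nat.clog 2 n : ℝ) * Real.log 2 ≤ 2 * Real.log n := by
  have hlog : Real.log 2 ≤ Real.log n := Real.log_le_log two_pos (by exact_mod_cast hn)
  have hpow : ((Nat.clog 2 n - 1 : ℕ) : ℝ) * Real.log 2 < Real.log n := by
    rw [← Real.log_pow]
    exact Real.log_lt_log (by positivity)
      (by exact_mod_cast Nat.pow_pred_clog_lt_self one_lt_two hn)
  have : (Nat.clog 2 n : ℝ) ≤ (Nat.clog 2 n - 1 : ℕ) + 1 := by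
    exact_mod_cast (by omega : Nat.clog 2 n ≤ Nat.clog 2 n - 1 + 1)
  nlinarith [Real.log_pos one_lt_two]

section Packing

local notation "ℝ²" => EuclideanSpace ℝ (Fin 2)

theorem escDist_nonneg (K L : Set ℝ²) : 0 ≤ escDist K L :=
  Real.sInf_nonneg (by rintro _ ⟨x, -, y, -, rfl⟩; exact dist_nonneg)

theorem subset_thickening_of_escDist_lt {K L : Set ℝ²} (hK : IsBounded K) (hL : L.Nonempty)
    {a : ℝ} (h : escDist K L < a) : K ⊆ thickening (a + diam K) L := by
  intro x hx
  obtain ⟨_, ⟨p, hp, q, hq, rfl⟩, hpq⟩ := exists_lt_of_csInf_lt (Nonempty.image2 ⟨x, hx⟩ hL) h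
  refine mem_thickening_iff.mpr ⟨q, hq, ?_⟩
  linarith [dist_triangle x p q, dist_le_diam_of_mem hK hx hp]

theorem sum_sq_mul_pi_le_volume {ι : Type*} {s : Finset ι} {p : ι → ℝ²} {ρ : ι → ℝ}
    (hρ : ∀ i ∈ s, 0 ≤ ρ i) (hdisj : (s : Set ι).PairwiseDisjoint fun i => ball (p i) (ρ i))
    {S : Set ℝ²} (hS : volume S ≠ ⊤) (hsub : ∀ i ∈ s, ball (p i) (ρ i) ⊆ S) :
    ∑ i ∈ s, ρ i ^ 2 * Real.pi ≤ (volume S).toReal := by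
  have hvol : ∑ i ∈ s, volume (ball (p i) (ρ i)) ≤ volume S := by
    rw [← measure_biUnion_finset hdisj fun i _ => measurableSet_ball]
    exact measure_mono (iUnion₂_subset hsub)
  have := ENNReal.toReal_mono hS hvol
  rw [ENNReal.toReal_sum fun i _ => measure_ball_lt_top.ne] at this
  convert this using 2 with i hi
  simp [ENNReal.toReal_ofReal (hρ i hi), Real.pi_nonneg]

variable {ι : Type*} {C D : Set ℝ²} {c z : ℝ²} {r r₀ : ℝ} {v : ι → ℝ²} {μ : ι → ℝ}

theorem sum_le_of_escDist_lt_of_mem_Ioc (hC : IsBounded C) (hr : 0 < r) (hcr : ball c r ⊆ C)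
    (hDconv : Convex ℝ D) (hDcpt : IsCompact D) (hr₀ : 0 < r₀) (hzr : ball z r₀ ⊆ D)
    (hP : IsHomothetPacking C D v μ) (s : Finset ι) {a : ℝ} (ha : 0 < a)
    (hs : ∀ i ∈ s, a / 2 < μ i ∧ μ i ≤ a ∧ escDist (homothet C (v i) (μ i)) (frontier D) < μ i) :
    ∑ i ∈ s, μ i ≤ 4 * (1 + diam C) * (volume D).toReal / (Real.pi * r ^ 2 * r₀) := by
  set w := (1 + diam C) * a
  have hw : 0 < w := mul_pos (by linarith [diam_nonneg (s := C)]) ha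
  have hfr : (frontier D).Nonempty :=
    hDcpt.frontier_nonempty ⟨z, hzr (mem_ball_self hr₀)⟩
  have hballs : ∀ i ∈ s, ball (v i + μ i • c) (μ i * r) ⊆ D ∩ thickening w (frontier D) := by
    intro i hi
    obtain ⟨-, hμa, hesc⟩ := hs i hi
    have hnear := subset_thickening_of_escDist_lt (hC.homothet _ _) hfr hesc
    rw [diam_homothet (hP.pos i).le] at hnear
    refine (ball_subset_homothet hcr (hP.pos i) _).trans
      (subset_inter (hP.subset i) (hnear.trans (thickening_mono ?_ _)))
    nlinarith [diam_nonneg (s := C)]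
  have hdisj_balls : (s : Set ι).PairwiseDisjoint fun i => ball (v i + μ i • c) (μ i * r) :=
    fun i _ j _ hij => (hP.disjoint hij).mono
      (isOpen_ball.subset_interior_iff.mpr (ball_subset_homothet hcr (hP.pos i) _))
      (isOpen_ball.subset_interior_iff.mpr (ball_subset_homothet hcr (hP.pos j) _))
  have hvolD : volume D ≠ ⊤ := hDcpt.measure_lt_top.ne
  have harea : ∑ i ∈ s, (μ i * r) ^ 2 * Real.pi ≤
      (volume (D ∩ thickening w (frontier D))).toReal :=
    sum_sq_mul_pi_le_volume (fun i _ => (mul_pos (hP.pos i) hr).le) hdisj_balls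
      (measure_ne_top_of_subset inter_subset_left hvolD) hballs
  have hstrip : (volume (D ∩ thickening w (frontier D))).toReal ≤
      2 * w / r₀ * (volume D).toReal := by
    have := hDconv.addHaar_inter_thickening_frontier_le volume hr₀ hw hzr
    rw [finrank_euclideanSpace_fin] at this
    have := ENNReal.toReal_mono (ENNReal.mul_ne_top ENNReal.ofReal_ne_top hvolD) this
    rwa [ENNReal.toReal_mul, ENNReal.toReal_ofReal (by positivity), Nat.cast_ofNat] at this
  have hr2 : 0 < Real.pi * r ^ 2 := by positivity
  calc ∑ i ∈ s, μ i ≤ ∑ i ∈ s, 2 / (a * (Real.pi * r ^ 2)) * ((μ i * r) ^ 2 * Real.pi) := by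
        refine Finset.sum_le_sum fun i hi => ?_
        rw [div_mul_eq_mul_div, le_div_iff₀ (by positivity)]
        have := (hs i hi).1
        nlinarith [mul_pos (hP.pos i) hr2]
    _ ≤ 2 / (a * (Real.pi * r ^ 2)) * (2 * w / r₀ * (volume D).toReal) := by
        rw [← Finset.mul_sum]
        gcongr
        exact harea.trans hstrip
    _ = 4 * (1 + diam C) * (volume D).toReal / (Real.pi * r ^ 2 * r₀) := by
        field_simp
        ring

theorem sum_filter_escDist_lt_le [Fintype ι] (hC : IsBounded C) (hr : 0 < r) (hcr : ball c r ⊆ C)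
    (hDconv : Convex ℝ D) (hDcpt : IsCompact D) (hr₀ : 0 < r₀) (hzr : ball z r₀ ⊆ D)
    (hP : IsHomothetPacking C D v μ) {K : ℕ} (hK : Fintype.card ι ≤ 2 ^ K) :
    ∑ i with escDist (homothet C (v i) (μ i)) (frontier D) < μ i, μ i ≤
      diam D / (2 * r) + K * (4 * (1 + diam C) * (volume D).toReal / (Real.pi * r ^ 2 * r₀)) := by
  set M := diam D / (2 * r)
  set B := Finset.univ.filter fun i => escDist (homothet C (v i) (μ i)) (frontier D) < μ i
  have hM : 0 < M := by
    have := diam_mono hzr hDcpt.isBounded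
    rw [diam_ball_eq _ hr₀.le] at this
    exact div_pos (by linarith) (by positivity)
  have hsmall : ∑ i ∈ B with ¬M / 2 ^ K < μ i, μ i ≤ M :=
    calc ∑ i ∈ B with ¬M / 2 ^ K < μ i, μ i
        ≤ (B.filter fun i => ¬M / 2 ^ K < μ i).card • (M / 2 ^ K) :=
          Finset.sum_le_card_nsmul _ _ _ fun i hi => not_lt.mp (Finset.mem_filter.mp hi).2
      _ ≤ 2 ^ K * (M / 2 ^ K) := by
          rw [nsmul_eq_mul]
          gcongr
          exact_mod_cast (Finset.card_le_univ _).trans hK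
      _ = M := mul_div_cancel₀ _ (by positivity)
  have hμM : ∀ i ∈ B, μ i ≤ M / 2 ^ 0 := fun i _ => by
    simpa using le_diam_div_of_ball_subset_homothet hr (hP.pos i) hcr hDcpt.isBounded (hP.subset i)
  have hlarge := B.sum_filter_lt_le_mul_of_antitone μ (θ := fun k => M / 2 ^ k)
    (fun k l hkl => div_le_div_of_nonneg_left hM.le (by positivity)
      (pow_le_pow_right₀ one_le_two hkl)) hμM
    (fun k => sum_le_of_escDist_lt_of_mem_Ioc hC hr hcr hDconv hDcpt hr₀ hzr hP _
      (a := M / 2 ^ k) (by positivity) fun i hi => by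
        obtain ⟨hiB, hlow, hhigh⟩ := Finset.mem_filter.mp hi
        rw [pow_succ, ← div_div] at hlow
        exact ⟨hlow, hhigh, (Finset.mem_filter.mp hiB).2⟩) K
  rw [← Finset.sum_filter_add_sum_filter_not B fun i => M / 2 ^ K < μ i]
  linarith

theorem sum_le_sum_escDist_add [Fintype ι] (hC : IsBounded C) (hr : 0 < r)
    (hcr : ball c r ⊆ C) (hDconv : Convex ℝ D) (hDcpt : IsCompact D) (hr₀ : 0 < r₀)
    (hzr : ball z r₀ ⊆ D) (hP : IsHomothetPacking C D v μ) {K : ℕ}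
    (hK : Fintype.card ι ≤ 2 ^ K) :
    ∑ i, μ i ≤ ∑ i, escDist (homothet C (v i) (μ i)) (frontier D) +
      (diam D / (2 * r) + K * (4 * (1 + diam C) * (volume D).toReal / (Real.pi * r ^ 2 * r₀))) := by
  set t := fun i => escDist (homothet C (v i) (μ i)) (frontier D)
  have hnear : ∑ i with ¬t i < μ i, μ i ≤ ∑ i, t i :=
    (Finset.sum_le_sum fun i hi => not_lt.mp (Finset.mem_filter.mp hi).2).trans
      (Finset.sum_le_sum_of_subset_of_nonneg (Finset.filter_subset _ _)
        fun i _ _ => escDist_nonneg _ _)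
  rw [← Finset.sum_filter_add_sum_filter_not Finset.univ fun i => t i < μ i]
  linarith [sum_filter_escDist_lt_le hC hr hcr hDconv hDcpt hr₀ hzr hP hK]

end Packing

theorem packing_escape_log_bound_general
    (C D : Set (EuclideanSpace ℝ (Fin 2)))
    (hCcpt : IsCompact C) (hCint : (interior C).Nonempty)
    (hDconv : Convex ℝ D) (hDcpt : IsCompact D) (hDint : (interior D).Nonempty) :
    ∃ ρ : ℝ, 0 < ρ ∧ ∀ n : ℕ, 2 ≤ n →
      ∀ (v : Fin n → EuclideanSpace ℝ (Fin 2)) (μ : Fin n → ℝ),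
        (∀ i, 0 < μ i) →
        (∀ i, (fun x => v i + μ i • x) '' C ⊆ D) →
        (∀ i j, i ≠ j →
          Disjoint (interior ((fun x => v i + μ i • x) '' C))
                   (interior ((fun x => v j + μ j • x) '' C))) →
        ∑ i, μ i ≤
          ρ * ((∑ i, escDist ((fun x => v i + μ i • x) '' C) (frontier D)) +
            Real.log n) := by
  obtain ⟨c, r, hr, hcr⟩ : ∃ c r, 0 < r ∧ ball c r ⊆ interior C := by
    obtain ⟨c, hc⟩ := hCint
    exact ⟨c, isOpen_iff.mp isOpen_interior c hc⟩
  obtain ⟨z, r₀, hr₀, hzr⟩ : ∃ z r₀, 0 < r₀ ∧ ball z r₀ ⊆ interior D := by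
    obtain ⟨z, hz⟩ := hDint
    exact ⟨z, isOpen_iff.mp isOpen_interior z hz⟩
  set M := diam D / (2 * r)
  set c₂ := 4 * (1 + diam C) * (volume D).toReal / (Real.pi * r ^ 2 * r₀)
  set q := (M + 2 * c₂) / Real.log 2
  have hlog2 : 0 < Real.log 2 := Real.log_pos one_lt_two
  refine ⟨1 + q, by positivity, fun n hn v μ hμ hsub hdisj => ?_⟩
  have hsum := sum_le_sum_escDist_add hCcpt.isBounded hr (hcr.trans interior_subset) hDconv
    hDcpt hr₀ (hzr.trans interior_subset) ⟨hμ, hsub, fun i j => hdisj i j⟩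
    (K := Nat.clog 2 n) (by simpa using Nat.le_pow_clog one_lt_two n)
  have hlogn : Real.log 2 ≤ Real.log n := Real.log_le_log two_pos (by exact_mod_cast hn)
  have hclasses : M + Nat.clog 2 n * c₂ ≤ q * Real.log n := by
    rw [div_mul_eq_mul_div, le_div_iff₀ hlog2]
    nlinarith [Nat.clog_two_mul_log_two_le hn, (by positivity : 0 ≤ M), (by positivity : 0 ≤ c₂)]
  have hesc : 0 ≤ ∑ i, escDist (homothet C (v i) (μ i)) (frontier D) :=
    Finset.sum_nonneg fun i _ => escDist_nonneg _ _
  calc ∑ i, μ i ≤ ∑ i, escDist (homothet C (v i) (μ i)) (frontier D) + q * Real.log n :=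
        hsum.trans (add_le_add_right hclasses _)
    _ ≤ (1 + q) * (∑ i, escDist (homothet C (v i) (μ i)) (frontier D) + Real.log n) := by
        nlinarith [mul_nonneg (by positivity : 0 ≤ q) hesc]

/-- Proposition 4: There is `ρ > 0` (depending on `C` and `D`) such that
for every `n ≥ 2` and every packing of `n` positive homothets of `C` in `D`, the sum of
homothety factors is at most `ρ · (esc(S) + log n)`, where `esc(S)` is the total distance
of the homothets from the frontier of `D`. -/
theorem packing_escape_log_bound
    (C D : Set (EuclideanSpace ℝ (Fin 2)))
    (hCconv : Convex ℝ C) (hCcpt : IsCompact C) (hCint : (interior C).Nonempty)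
    (hDconv : Convex ℝ D) (hDcpt : IsCompact D) (hDint : (interior D).Nonempty) :
    ∃ ρ : ℝ, 0 < ρ ∧ ∀ n : ℕ, 2 ≤ n →
      ∀ (v : Fin n → EuclideanSpace ℝ (Fin 2)) (μ : Fin n → ℝ),
        (∀ i, 0 < μ i) →
        (∀ i, (fun x => v i + μ i • x) '' C ⊆ D) →
        (∀ i j, i ≠ j →
          Disjoint (interior ((fun x => v i + μ i • x) '' C))
                   (interior ((fun x => v j + μ j • x) '' C))) →
        ∑ i, μ i ≤
          ρ * ((∑ i, escDist ((fun x => v i + μ i • x) '' C) (frontier D)) +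
            Real.log n) :=
  packing_escape_log_bound_general C D hCcpt hCint hDconv hDcpt hDint
end
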